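/- Let Q ⊆ {1,…,n}\{p} and let x_Q ∈ {0,1}^Q be such that Pr(Y_Q = x_Q) > 0, i.e., the output of the mechanism restricted to Q equals x_Q (no erasures on Q) with positive probability. Then the privacy leakage of any local redaction mechanism satisfies L(X_p→Y) ≥ i(X_p⇝X_Q = x_Q). -/
import Mathlib


open Finset
open scoped Classical

noncomputable section

/-- Transition matrix of the two-state Markov chain:
`transP α β i j = Pr(X_{t+1} = j | X_t = i)` with `false ↔ 0`, `true ↔ 1`. -/
def transP (α β : ℝ) : Bool → Bool → ℝ
  | false, false => 1 - α
  | false, true  => α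
  | true,  false => β
  | true,  true  => 1 - β

/-- Stationary distribution of the chain. -/
def statDist (α β : ℝ) : Bool → ℝ
  | false => β / (α + β)
  | true  => α / (α + β)

/-- Joint pmf of the stationary Markov chain `X_1, …, X_n` (0-indexed in Lean). -/
def jointX (α β : ℝ) {n : ℕ} (x : Fin n → Bool) : ℝ :=
  if h : 0 < n then
    statDist α β (x ⟨0, h⟩) *
      ∏ i : Fin (n - 1),
        transP α β (x ⟨i.1, by have := i.2; omega⟩) (x ⟨i.1 + 1, by have := i.2; omega⟩)
  else 1

/-- Probability of an event under the chain. -/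
def prX (α β : ℝ) {n : ℕ} (E : Set (Fin n → Bool)) : ℝ :=
  ∑ x : Fin n → Bool, E.indicator (jointX α β) x

/-- Conditional probability of the event `E` given the event `C`. -/
def condProb (α β : ℝ) {n : ℕ} (E C : Set (Fin n → Bool)) : ℝ :=
  prX α β (E ∩ C) / prX α β C

/-- `log (a / b)` valued in the extended reals: `⊥` when `a = 0` and
`⊤` when `a > 0 = b` (ratios of probabilities, so nonnegative inputs). -/
def logRatio (a b : ℝ) : EReal :=
  if a ≤ 0 then ⊥ else if b ≤ 0 then ⊤ else ((Real.log (a / b) : ℝ) : EReal)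

/-- Pointwise influence `i(X_p ⇝ X_S = g_S)`. -/
def pwInfl (α β : ℝ) {n : ℕ} (p : Fin n) (S : Finset (Fin n)) (g : Fin n → Bool) : EReal :=
  max
    (logRatio (condProb α β {x | ∀ t ∈ S, x t = g t} {x | x p = true})
              (condProb α β {x | ∀ t ∈ S, x t = g t} {x | x p = false}))
    (logRatio (condProb α β {x | ∀ t ∈ S, x t = g t} {x | x p = false})
              (condProb α β {x | ∀ t ∈ S, x t = g t} {x | x p = true}))

/-- Pointwise influence on a single record: `i(X_p ⇝ X_t = b)`. -/
def pwInfl1 (α β : ℝ) {n : ℕ} (p t : Fin n) (b : Bool) : EReal :=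
  pwInfl α β p {t} (fun _ => b)

/-- Max-influence `I(X_p ⇝ X_S)`. -/
def maxInfl (α β : ℝ) {n : ℕ} (p : Fin n) (S : Finset (Fin n)) : EReal :=
  ⨆ g : Fin n → Bool, pwInfl α β p S g

/-- Kernel of a local redaction mechanism with redaction probabilities
`r t x = Pr(Y_t = ⊥ | X_t = x)`: probability of the output `y` given the data `x`
(`none` encodes the erasure symbol `⊥`). -/
def mechK {n : ℕ} (r : Fin n → Bool → ℝ) (x : Fin n → Bool) (y : Fin n → Option Bool) : ℝ :=
  ∏ t, (y t).elim (r t (x t)) (fun b => if b = x t then 1 - r t (x t) else 0)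

/-- The redaction probabilities are genuine probabilities. -/
def validMech {n : ℕ} (r : Fin n → Bool → ℝ) : Prop :=
  ∀ t x, 0 ≤ r t x ∧ r t x ≤ 1

/-- Data-independent mechanism: the redaction probability does not depend on the data. -/
def dataIndep {n : ℕ} (r : Fin n → Bool → ℝ) : Prop :=
  ∀ t, r t false = r t true

/-- Joint probability `Pr(X ∈ E, Y ∈ F)`. -/
def prXY (α β : ℝ) {n : ℕ} (r : Fin n → Bool → ℝ) (E : Set (Fin n → Bool))
    (F : Set (Fin n → Option Bool)) : ℝ :=
  ∑ x : Fin n → Bool, ∑ y : Fin n → Option Bool,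
    E.indicator (jointX α β) x * F.indicator (mechK r x) y

/-- Output probability `Pr(Y ∈ F)`. -/
def prY (α β : ℝ) {n : ℕ} (r : Fin n → Bool → ℝ) (F : Set (Fin n → Option Bool)) : ℝ :=
  prXY α β r Set.univ F

/-- Conditional output probability `Pr(Y ∈ F | X_p = a)`. -/
def condY (α β : ℝ) {n : ℕ} (r : Fin n → Bool → ℝ) (p : Fin n) (a : Bool)
    (F : Set (Fin n → Option Bool)) : ℝ :=
  prXY α β r {x | x p = a} F / prX α β {x | x p = a}

/-- Privacy leakage `L(X_p → Y_T)` of the marginal output on the index set `T`: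
`log sup_{y_T ∈ supp, a} Pr(Y_T = y_T | X_p = a)/Pr(Y_T = y_T | X_p = ¬a)`. -/
def leakOn (α β : ℝ) {n : ℕ} (r : Fin n → Bool → ℝ) (p : Fin n) (T : Finset (Fin n)) : EReal :=
  ⨆ g : Fin n → Option Bool, ⨆ a : Bool,
    logRatio (condY α β r p a {y | ∀ t ∈ T, y t = g t})
             (condY α β r p (!a) {y | ∀ t ∈ T, y t = g t})

/-- Privacy leakage `L(X_p → Y)`. -/
def leak (α β : ℝ) {n : ℕ} (r : Fin n → Bool → ℝ) (p : Fin n) : EReal :=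
  leakOn α β r p univ

/-- Utility: expected fraction of correctly released records. -/
def utility (α β : ℝ) {n : ℕ} (r : Fin n → Bool → ℝ) : ℝ :=
  (1 / (n : ℝ)) * ∑ x : Fin n → Bool, ∑ y : Fin n → Option Bool,
    jointX α β x * mechK r x y * ∑ t, (if y t = some (x t) then (1 : ℝ) else 0)

/-- Large-leakage region `R_{L|ε'}`. -/
def regL (α β : ℝ) {n : ℕ} (p : Fin n) (ε' : ℝ) : Finset (Fin n) :=
  univ.filter fun t =>
    (ε' : EReal) < pwInfl1 α β p t false ∧ pwInfl1 α β p t false ≤ pwInfl1 α β p t true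

/-- Medium-leakage region `R_{M|ε'}`. -/
def regM (α β : ℝ) {n : ℕ} (p : Fin n) (ε' : ℝ) : Finset (Fin n) :=
  univ.filter fun t =>
    pwInfl1 α β p t false ≤ (ε' : EReal) ∧ (ε' : EReal) < pwInfl1 α β p t true

/-- Small-leakage region `R_{S|ε'}`. -/
def regS (α β : ℝ) {n : ℕ} (p : Fin n) (ε' : ℝ) : Finset (Fin n) :=
  univ.filter fun t =>
    pwInfl1 α β p t false ≤ pwInfl1 α β p t true ∧ pwInfl1 α β p t true ≤ (ε' : EReal)

/-- `Q^{(ℓ)}`: elements of `Q` left of `p` (inclusive). -/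
def leftOf {n : ℕ} (p : Fin n) (Q : Finset (Fin n)) : Finset (Fin n) := Q.filter (· ≤ p)

/-- `Q^{(r)}`: elements of `Q` right of `p` (inclusive). -/
def rightOf {n : ℕ} (p : Fin n) (Q : Finset (Fin n)) : Finset (Fin n) := Q.filter (p ≤ ·)

/-- The region `S = R_{S|ε_ℓ}^{(ℓ)} ∪ R_{S|ε_r}^{(r)}` of a 3R mechanism. -/
def set3S (α β : ℝ) {n : ℕ} (p : Fin n) (εl εr : ℝ) : Finset (Fin n) :=
  leftOf p (regS α β p εl) ∪ rightOf p (regS α β p εr)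

/-- The region `M = R_{M|ε_ℓ}^{(ℓ)} ∪ R_{M|ε_r}^{(r)}` of a 3R mechanism. -/
def set3M (α β : ℝ) {n : ℕ} (p : Fin n) (εl εr : ℝ) : Finset (Fin n) :=
  leftOf p (regM α β p εl) ∪ rightOf p (regM α β p εr)

/-- The region `L = R_{L|ε_ℓ}^{(ℓ)} ∪ R_{L|ε_r}^{(r)}` of a 3R mechanism. -/
def set3L (α β : ℝ) {n : ℕ} (p : Fin n) (εl εr : ℝ) : Finset (Fin n) :=
  leftOf p (regL α β p εl) ∪ rightOf p (regL α β p εr)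

/-- `r` is the 3R mechanism with regions `S`, `M`, `L` and redaction parameters `q`. -/
def is3R {n : ℕ} (r : Fin n → Bool → ℝ) (S M L : Finset (Fin n)) (q : Fin n → ℝ) : Prop :=
  ∀ t, (t ∈ L → ∀ x, r t x = 1) ∧ (t ∈ S → ∀ x, r t x = 0) ∧
    (t ∈ M → r t false = q t ∧ r t true = 1)

/-- Closed form `i_low(Δ)`. -/
def iLow (α β : ℝ) (Δ : ℕ) : ℝ :=
  |Real.log ((1 + (α / β) * (1 - α - β) ^ Δ) / (1 - (1 - α - β) ^ Δ))|

/-- Closed form `i_high(Δ)`. -/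
def iHigh (α β : ℝ) (Δ : ℕ) : ℝ :=
  |Real.log ((1 + (β / α) * (1 - α - β) ^ Δ) / (1 - (1 - α - β) ^ Δ))|

section statement4aux

variable {n : ℕ}

lemma transP_pos {α β : ℝ} (hα : 0 < α) (hαβ : α ≤ β) (hβ : β < 1) (a b : Bool) :
    0 < transP α β a b := by
  cases a <;> cases b <;> simp [transP] <;> linarith

lemma statDist_pos {α β : ℝ} (hα : 0 < α) (hαβ : α ≤ β) (hβ : β < 1) (a : Bool) :
    0 < statDist α β a := by
  have h1 : 0 < α + β := by linarith
  have h2 : 0 < β := lt_of_lt_of_le hα hαβ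
  cases a <;> simp [statDist] <;> positivity

lemma jointX_pos {α β : ℝ} (hα : 0 < α) (hαβ : α ≤ β) (hβ : β < 1)
    (x : Fin n → Bool) : 0 < jointX α β x := by
  unfold jointX
  split
  · exact mul_pos (statDist_pos hα hαβ hβ _)
      (Finset.prod_pos fun i _ => transP_pos hα hαβ hβ _ _)
  · exact one_pos

lemma prX_nonneg (α β : ℝ) (hα : 0 < α) (hαβ : α ≤ β) (hβ : β < 1)
    (E : Set (Fin n → Bool)) : 0 ≤ prX α β E :=
  Finset.sum_nonneg fun x _ =>
    Set.indicator_nonneg (fun x _ => (jointX_pos hα hαβ hβ x).le) x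

lemma prX_pos (α β : ℝ) (hα : 0 < α) (hαβ : α ≤ β) (hβ : β < 1)
    {E : Set (Fin n → Bool)} (hE : E.Nonempty) : 0 < prX α β E := by
  obtain ⟨x0, hx0⟩ := hE
  have h1 : ∀ x : Fin n → Bool, 0 ≤ E.indicator (jointX α β) x := fun x =>
    Set.indicator_nonneg (fun x _ => (jointX_pos hα hαβ hβ x).le) x
  calc (0:ℝ) < jointX α β x0 := jointX_pos hα hαβ hβ x0
    _ = E.indicator (jointX α β) x0 := (Set.indicator_of_mem hx0 _).symm
    _ ≤ prX α β E := Finset.single_le_sum (fun x _ => h1 x) (Finset.mem_univ x0)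

lemma mechK_nonneg {r : Fin n → Bool → ℝ} (hr : validMech r)
    (x : Fin n → Bool) (y : Fin n → Option Bool) : 0 ≤ mechK r x y := by
  refine Finset.prod_nonneg fun t _ => ?_
  cases hy : y t with
  | none => exact (hr t (x t)).1
  | some b =>
      simp only [Option.elim]
      split
      · linarith [(hr t (x t)).2]
      · exact le_rfl
lemma prXY_nonneg (α β : ℝ) (hα : 0 < α) (hαβ : α ≤ β) (hβ : β < 1)
    {r : Fin n → Bool → ℝ} (hr : validMech r)
    (E : Set (Fin n → Bool)) (F : Set (Fin n → Option Bool)) :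
    0 ≤ prXY α β r E F := by
  refine Finset.sum_nonneg fun x _ => Finset.sum_nonneg fun y _ => mul_nonneg ?_ ?_
  · exact Set.indicator_nonneg (fun x _ => (jointX_pos hα hαβ hβ x).le) x
  · exact Set.indicator_nonneg (fun y _ => mechK_nonneg hr x y) y

/-- Sum of the mechanism kernel over outputs agreeing with `g` on `Q`. -/
lemma sum_mech_agree (r : Fin n → Bool → ℝ) (Q : Finset (Fin n)) (g : Fin n → Bool)
    (x : Fin n → Bool) :
    ∑ y : Fin n → Option Bool,
      ({y : Fin n → Option Bool | ∀ t ∈ Q, y t = some (g t)}).indicator (mechK r x) y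
      = ∏ t ∈ Q, (if x t = g t then 1 - r t (x t) else 0) := by
  classical
  set f : Fin n → Option Bool → ℝ := fun t u =>
    (if t ∈ Q then (if u = some (g t) then (1:ℝ) else 0) else 1)
      * u.elim (r t (x t)) (fun b => if b = x t then 1 - r t (x t) else 0) with hf
  have hpoint : ∀ y : Fin n → Option Bool,
      ({y : Fin n → Option Bool | ∀ t ∈ Q, y t = some (g t)}).indicator (mechK r x) y
        = ∏ t : Fin n, f t (y t) := by
    intro y
    by_cases hy : y ∈ {y : Fin n → Option Bool | ∀ t ∈ Q, y t = some (g t)}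
    · rw [Set.indicator_of_mem hy]
      unfold mechK
      refine Finset.prod_congr rfl fun t _ => ?_
      by_cases ht : t ∈ Q
      · have := hy t ht
        simp [hf, ht, this]
      · simp [hf, ht]
    · rw [Set.indicator_of_notMem hy]
      simp only [Set.mem_setOf_eq, not_forall] at hy
      obtain ⟨t, htQ, hne⟩ := hy
      symm
      apply Finset.prod_eq_zero (Finset.mem_univ t)
      simp [hf, htQ, hne]
  calc ∑ y : Fin n → Option Bool,
        ({y : Fin n → Option Bool | ∀ t ∈ Q, y t = some (g t)}).indicator (mechK r x) y
      = ∑ y : Fin n → Option Bool, ∏ t : Fin n, f t (y t) :=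
        Finset.sum_congr rfl fun y _ => hpoint y
    _ = ∑ y ∈ Fintype.piFinset (fun _ : Fin n => (Finset.univ : Finset (Option Bool))),
          ∏ t : Fin n, f t (y t) := by rw [Fintype.piFinset_univ]
    _ = ∏ t : Fin n, ∑ u : Option Bool, f t u := (Finset.prod_univ_sum _ _).symm
    _ = ∏ t : Fin n, (if t ∈ Q then (if x t = g t then 1 - r t (x t) else 0) else 1) := by
        refine Finset.prod_congr rfl fun t _ => ?_
        by_cases ht : t ∈ Q
        · rcases Bool.eq_false_or_eq_true (g t) with hg | hg <;>
          rcases Bool.eq_false_or_eq_true (x t) with hx | hx <;>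
            simp [hf, ht, hg, hx, Fintype.sum_option]
        · rcases Bool.eq_false_or_eq_true (x t) with hx | hx <;>
            simp [hf, ht, hx, Fintype.sum_option]
    _ = ∏ t ∈ Finset.univ ∩ Q, (if x t = g t then 1 - r t (x t) else 0) :=
        Finset.prod_ite_mem _ _ _
    _ = ∏ t ∈ Q, (if x t = g t then 1 - r t (x t) else 0) := by rw [Finset.univ_inter]

/-- Key marginalization identity. -/
lemma prXY_agree (α β : ℝ) (r : Fin n → Bool → ℝ) (Q : Finset (Fin n)) (g : Fin n → Bool)
    (E : Set (Fin n → Bool)) :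
    prXY α β r E {y : Fin n → Option Bool | ∀ t ∈ Q, y t = some (g t)}
      = (∏ t ∈ Q, (1 - r t (g t))) * prX α β (E ∩ {x : Fin n → Bool | ∀ t ∈ Q, x t = g t}) := by
  classical
  unfold prXY prX
  rw [Finset.mul_sum]
  refine Finset.sum_congr rfl fun x _ => ?_
  rw [← Finset.mul_sum, sum_mech_agree]
  by_cases hxQ : ∀ t ∈ Q, x t = g t
  · have hprod : ∏ t ∈ Q, (if x t = g t then 1 - r t (x t) else 0)
        = ∏ t ∈ Q, (1 - r t (g t)) :=
      Finset.prod_congr rfl fun t ht => by rw [if_pos (hxQ t ht), hxQ t ht]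
    rw [hprod]
    by_cases hxE : x ∈ E
    · rw [Set.indicator_of_mem hxE, Set.indicator_of_mem (show x ∈ E ∩ {x : Fin n → Bool | ∀ t ∈ Q, x t = g t} from ⟨hxE, hxQ⟩)]; ring
    · rw [Set.indicator_of_notMem hxE,
        Set.indicator_of_notMem (fun h => hxE (Set.mem_of_mem_inter_left h))]; ring
  · obtain ⟨t, htQ, hne⟩ : ∃ t ∈ Q, x t ≠ g t := by
      push_neg at hxQ; exact hxQ
    have h0 : ∏ t ∈ Q, (if x t = g t then 1 - r t (x t) else 0) = 0 :=
      Finset.prod_eq_zero htQ (if_neg hne)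
    have hnotmem : x ∉ E ∩ {x : Fin n → Bool | ∀ t ∈ Q, x t = g t} := by
      intro h
      exact hne (Set.mem_of_mem_inter_right h t htQ)
    rw [h0, Set.indicator_of_notMem hnotmem]
    ring
lemma singleton_out_set (h : Fin n → Option Bool) :
    {y : Fin n → Option Bool | ∀ t ∈ (Finset.univ : Finset (Fin n)), y t = h t}
      = ({h} : Set (Fin n → Option Bool)) := by
  ext y
  simp [Set.mem_singleton_iff, funext_iff]

lemma prXY_singleton (α β : ℝ) (r : Fin n → Bool → ℝ) (E : Set (Fin n → Bool))
    (h : Fin n → Option Bool) :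
    prXY α β r E ({h} : Set (Fin n → Option Bool))
      = ∑ x : Fin n → Bool, E.indicator (jointX α β) x * mechK r x h := by
  classical
  unfold prXY
  refine Finset.sum_congr rfl fun x _ => ?_
  rw [← Finset.mul_sum]
  congr 1
  have : ∀ y : Fin n → Option Bool,
      ({h} : Set (Fin n → Option Bool)).indicator (mechK r x) y
        = if y = h then mechK r x y else 0 := by
    intro y; simp [Set.indicator_apply]
  rw [Finset.sum_congr rfl fun y _ => this y, Finset.sum_ite_eq' Finset.univ h]
  simp

/-- Additivity of `prXY` over singleton outputs. -/
lemma prXY_sum_singletons (α β : ℝ) (r : Fin n → Bool → ℝ) (E : Set (Fin n → Bool))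
    (F : Set (Fin n → Option Bool)) [DecidablePred (· ∈ F)] :
    prXY α β r E F
      = ∑ h ∈ Finset.univ.filter (· ∈ F), prXY α β r E ({h} : Set (Fin n → Option Bool)) := by
  calc prXY α β r E F
      = ∑ x : Fin n → Bool, ∑ h ∈ Finset.univ.filter (· ∈ F),
          E.indicator (jointX α β) x * mechK r x h := by
        unfold prXY
        refine Finset.sum_congr rfl fun x _ => ?_
        rw [← Finset.mul_sum, ← Finset.mul_sum]
        congr 1
        rw [Finset.sum_filter]
        exact Finset.sum_congr rfl fun y _ => by simp [Set.indicator_apply]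
    _ = ∑ h ∈ Finset.univ.filter (· ∈ F), ∑ x : Fin n → Bool,
          E.indicator (jointX α β) x * mechK r x h := Finset.sum_comm
    _ = ∑ h ∈ Finset.univ.filter (· ∈ F), prXY α β r E ({h} : Set (Fin n → Option Bool)) :=
        Finset.sum_congr rfl fun h _ => (prXY_singleton α β r E h).symm

lemma logRatio_pos_pos {a b : ℝ} (ha : 0 < a) (hb : 0 < b) :
    logRatio a b = ((Real.log (a / b) : ℝ) : EReal) := by
  simp [logRatio, not_le.mpr ha, not_le.mpr hb]

lemma logRatio_top {a b : ℝ} (ha : 0 < a) (hb : b ≤ 0) : logRatio a b = ⊤ := by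
  simp [logRatio, not_le.mpr ha, hb]

lemma logRatio_scale {c a b : ℝ} (hc : 0 < c) (ha : 0 < a) (hb : 0 < b) :
    logRatio (c * a) (c * b) = logRatio a b := by
  rw [logRatio_pos_pos (mul_pos hc ha) (mul_pos hc hb), logRatio_pos_pos ha hb,
    mul_div_mul_left a b (ne_of_gt hc)]

lemma logRatio_mono {a b a' b' : ℝ} (ha : 0 < a) (hb : 0 < b) (ha' : 0 < a') (hb' : 0 < b')
    (h : a / b ≤ a' / b') : logRatio a b ≤ logRatio a' b' := by
  rw [logRatio_pos_pos ha hb, logRatio_pos_pos ha' hb']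
  exact EReal.coe_le_coe_iff.mpr (Real.log_le_log (div_pos ha hb) h)

/-- Mediant inequality. -/
lemma mediant_exists {ι : Type*} (S : Finset ι) (A B : ι → ℝ)
    (hA : ∀ i ∈ S, 0 ≤ A i) (hB : ∀ i ∈ S, 0 ≤ B i)
    (hAS : 0 < ∑ i ∈ S, A i) :
    ∃ i ∈ S, 0 < A i ∧ (∑ j ∈ S, A j) * B i ≤ A i * ∑ j ∈ S, B j := by
  by_contra hc
  push_neg at hc
  obtain ⟨i0, hi0S, hi0⟩ : ∃ i ∈ S, 0 < A i := by
    by_contra hall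
    push_neg at hall
    exact absurd (Finset.sum_nonpos hall) (not_le.mpr hAS)
  have hle : ∀ i ∈ S, A i * (∑ j ∈ S, B j) ≤ (∑ j ∈ S, A j) * B i := by
    intro i hi
    rcases lt_or_ge 0 (A i) with hAi | hAi
    · exact (hc i hi hAi).le
    · have : A i = 0 := le_antisymm hAi (hA i hi)
      rw [this, zero_mul]
      exact mul_nonneg hAS.le (hB i hi)
  have hlt : A i0 * (∑ j ∈ S, B j) < (∑ j ∈ S, A j) * B i0 := hc i0 hi0S hi0
  have := Finset.sum_lt_sum hle ⟨i0, hi0S, hlt⟩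
  rw [← Finset.sum_mul, ← Finset.mul_sum] at this
  exact lt_irrefl _ this
end statement4aux

/-- If the mechanism outputs the (unerased) values `g` on `Q ∌ p` with
positive probability, then its leakage about `X_p` is at least the pointwise influence
`i(X_p ⇝ X_Q = g_Q)`. -/
theorem statement4 {n : ℕ} (hn : 1 ≤ n) (p : Fin n) (α β : ℝ)
    (hα : 0 < α) (hαβ : α ≤ β) (hβ : β < 1)
    (r : Fin n → Bool → ℝ) (hr : validMech r)
    (Q : Finset (Fin n)) (hpQ : p ∉ Q) (g : Fin n → Bool)
    (hpos : 0 < prY α β r {y | ∀ t ∈ Q, y t = some (g t)}) :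
    pwInfl α β p Q g ≤ leak α β r p := by
  classical
  set EQ : Set (Fin n → Bool) := {x | ∀ t ∈ Q, x t = g t} with hEQ
  set F : Set (Fin n → Option Bool) := {y | ∀ t ∈ Q, y t = some (g t)} with hF
  set c : ℝ := ∏ t ∈ Q, (1 - r t (g t)) with hcdef
  -- positivity of c
  have hprYF : prY α β r F = c * prX α β (Set.univ ∩ EQ) := prXY_agree α β r Q g Set.univ
  have hEQne : (Set.univ ∩ EQ).Nonempty := ⟨g, Set.mem_univ g, fun t _ => rfl⟩
  have hc : 0 < c := by
    have h1 : 0 < prX α β (Set.univ ∩ EQ) := prX_pos α β hα hαβ hβ hEQne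
    have h2 : 0 < c * prX α β (Set.univ ∩ EQ) := hprYF ▸ hpos
    rcases mul_pos_iff.mp h2 with ⟨h, _⟩ | ⟨_, h⟩
    · exact h
    · linarith
  -- the key inequality for each value of the sensitive bit
  have key : ∀ a : Bool,
      logRatio (condProb α β EQ {x | x p = a}) (condProb α β EQ {x | x p = !a})
        ≤ leak α β r p := by
    intro a
    -- notation for the two conditioning events
    set Ea : Set (Fin n → Bool) := {x | x p = a} with hEa
    set Eb : Set (Fin n → Bool) := {x | x p = !a} with hEb
    have hDa : 0 < prX α β Ea := prX_pos α β hα hαβ hβ ⟨fun _ => a, rfl⟩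
    have hDb : 0 < prX α β Eb := prX_pos α β hα hαβ hβ ⟨fun _ => !a, rfl⟩
    have hwit : ∀ b : Bool, ({x : Fin n → Bool | x p = b} ∩ EQ).Nonempty := by
      intro b
      refine ⟨fun t => if ht : t ∈ Q then g t else b, ?_, ?_⟩
      · show (if ht : p ∈ Q then g p else b) = b
        rw [dif_neg hpQ]
      · intro t ht
        show (if h : t ∈ Q then g t else b) = g t
        rw [dif_pos ht]
    have hNa : 0 < prX α β (EQ ∩ Ea) := by
      rw [Set.inter_comm]; exact prX_pos α β hα hαβ hβ (hwit a)
    have hNb : 0 < prX α β (EQ ∩ Eb) := by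
      rw [Set.inter_comm]; exact prX_pos α β hα hαβ hβ (hwit (!a))
    have hcpa : 0 < condProb α β EQ Ea := div_pos hNa hDa
    have hcpb : 0 < condProb α β EQ Eb := div_pos hNb hDb
    -- condY as a multiple of condProb
    have hcond : ∀ (E : Set (Fin n → Bool)) (b : Bool), E = {x | x p = b} →
        condY α β r p b F = c * condProb α β EQ E := by
      intro E b hEdef
      unfold condY condProb
      rw [← hEdef, prXY_agree α β r Q g E, Set.inter_comm E EQ, mul_div_assoc]
    have hca : condY α β r p a F = c * condProb α β EQ Ea := hcond Ea a rfl
    have hcb : condY α β r p (!a) F = c * condProb α β EQ Eb := hcond Eb (!a) rfl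
    have hYa : 0 < condY α β r p a F := hca ▸ mul_pos hc hcpa
    have hYb : 0 < condY α β r p (!a) F := hcb ▸ mul_pos hc hcpb
    -- decompose over singleton outputs
    set SF : Finset (Fin n → Option Bool) := Finset.univ.filter (· ∈ F) with hSF
    set A : (Fin n → Option Bool) → ℝ := fun h =>
      condY α β r p a {y | ∀ t ∈ (Finset.univ : Finset (Fin n)), y t = h t} with hA
    set B : (Fin n → Option Bool) → ℝ := fun h =>
      condY α β r p (!a) {y | ∀ t ∈ (Finset.univ : Finset (Fin n)), y t = h t} with hB
    have hAh : ∀ h, A h = prXY α β r Ea ({h} : Set (Fin n → Option Bool)) / prX α β Ea := by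
      intro h; rw [hA]; simp only; unfold condY; rw [singleton_out_set h, ← hEa]
    have hBh : ∀ h, B h = prXY α β r Eb ({h} : Set (Fin n → Option Bool)) / prX α β Eb := by
      intro h; rw [hB]; simp only; unfold condY; rw [singleton_out_set h, ← hEb]
    have hAnn : ∀ h ∈ SF, 0 ≤ A h := fun h _ => by
      rw [hAh h]; exact div_nonneg (prXY_nonneg α β hα hαβ hβ hr _ _) hDa.le
    have hBnn : ∀ h ∈ SF, 0 ≤ B h := fun h _ => by
      rw [hBh h]; exact div_nonneg (prXY_nonneg α β hα hαβ hβ hr _ _) hDb.le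
    have hsumA : ∑ h ∈ SF, A h = condY α β r p a F := by
      rw [Finset.sum_congr rfl fun h _ => hAh h, ← Finset.sum_div]
      unfold condY; rw [← hEa, hSF]
      exact congrArg (fun z => z / prX α β Ea) (prXY_sum_singletons α β r Ea F).symm
    have hsumB : ∑ h ∈ SF, B h = condY α β r p (!a) F := by
      rw [Finset.sum_congr rfl fun h _ => hBh h, ← Finset.sum_div]
      unfold condY; rw [← hEb, hSF]
      exact congrArg (fun z => z / prX α β Eb) (prXY_sum_singletons α β r Eb F).symm
    obtain ⟨h0, _, hA0, hmed⟩ :=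
      mediant_exists SF A B hAnn hBnn (by rw [hsumA]; exact hYa)
    rw [hsumA, hsumB] at hmed
    -- compare the log-ratios
    have step1 : logRatio (condProb α β EQ Ea) (condProb α β EQ Eb)
        = logRatio (condY α β r p a F) (condY α β r p (!a) F) := by
      rw [hca, hcb, logRatio_scale hc hcpa hcpb]
    have step2 : logRatio (condY α β r p a F) (condY α β r p (!a) F)
        ≤ logRatio (A h0) (B h0) := by
      rcases le_or_gt (B h0) 0 with hB0 | hB0
      · rw [logRatio_top hA0 hB0]; exact le_top
      · exact logRatio_mono hYa hYb hA0 hB0 ((div_le_div_iff₀ hYb hB0).mpr hmed)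
    have step3 : logRatio (A h0) (B h0) ≤ leak α β r p := by
      unfold leak leakOn
      refine le_trans ?_ (le_iSup _ h0)
      exact le_iSup (fun a' => logRatio
        (condY α β r p a' {y | ∀ t ∈ Finset.univ, y t = h0 t})
        (condY α β r p (!a') {y | ∀ t ∈ Finset.univ, y t = h0 t})) a
    exact step1 ▸ le_trans step2 step3
  have h1 := key true
  have h2 := key false
  simp only [Bool.not_true, Bool.not_false] at h1 h2
  exact max_le h1 h2
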